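/- Let K, L, P be positive integers, let h_i ∈ ℂ and let k_i, l_i be integers for i = 1,…,P. Define the OTFS delay-Doppler channel operator C acting on functions Z : ℤ/K × ℤ/L → ℂ by (C Z)[k,l] = Σ_{i=1}^{P} h_i e^{−2πi k_i l_i/(KL)} Z[(k − k_i) mod K, (l − l_i) mod L]. Let S_{k̃,l̃} denote the cyclic delay-Doppler shift (S_{k̃,l̃} X)[k,l] = X[(k − k̃) mod K, (l − l̃) mod L] for integers k̃, l̃. Then for every X: (C (S_{k̃,l̃} X))[k,l] = Σ_{i=1}^{P} h̄_i e^{−2πi (k_i + k̃)(l_i + l̃)/(KL)} X[(k − (k_i + k̃)) mod K, (l − (l_i + l̃)) mod L], where h̄_i = h_i e^{2πi (k_i l̃ + k̃ l_i + k̃ l̃)/(KL)}. That is, applying MD-CDDS with steps (k̃, l̃) to the OTFS input is equivalent to a channel whose i-th path has Doppler k_i + k̃, delay l_i + l̃, and gain h̄_i. -/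
import Mathlib


open Complex

/-- The OTFS delay-Doppler channel operator of a `P`-path channel with gains `h i`,
integer Doppler shifts `kd i` and integer delay shifts `ld i`:
`(C Z)[k,l] = Σ_i h_i e^{−2πi k_i l_i/(KL)} Z[(k − k_i) mod K, (l − l_i) mod L]`. -/
noncomputable def otfsChannel (K L P : ℕ) (h : Fin P → ℂ) (kd ld : Fin P → ℤ)
    (Z : ZMod K → ZMod L → ℂ) : ZMod K → ZMod L → ℂ :=
  fun k l => ∑ i : Fin P,
    h i * Complex.exp (-(2 * Real.pi * Complex.I * (kd i : ℂ) * (ld i : ℂ) / ((K : ℂ) * (L : ℂ))))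
      * Z (k - (kd i : ZMod K)) (l - (ld i : ZMod L))

/-- The cyclic delay-Doppler shift `(S_{k̃,l̃} X)[k,l] = X[(k − k̃) mod K, (l − l̃) mod L]`. -/
def ddShift (K L : ℕ) (kt lt : ℤ) (X : ZMod K → ZMod L → ℂ) : ZMod K → ZMod L → ℂ :=
  fun k l => X (k - (kt : ZMod K)) (l - (lt : ZMod L))

/-- applying MD-CDDS with steps `(k̃, l̃)` to the OTFS input is equivalent to a
channel whose `i`-th path has Doppler `k_i + k̃`, delay `l_i + l̃`, and gain
`h̄_i = h_i e^{2πi (k_i l̃ + k̃ l_i + k̃ l̃)/(KL)}`. -/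
theorem otfsChannel_ddShift (K L P : ℕ) (hK : 0 < K) (hL : 0 < L) (hP : 0 < P)
    (h : Fin P → ℂ) (kd ld : Fin P → ℤ) (kt lt : ℤ)
    (X : ZMod K → ZMod L → ℂ) (k : ZMod K) (l : ZMod L) :
    otfsChannel K L P h kd ld (ddShift K L kt lt X) k l =
      ∑ i : Fin P,
        (h i * Complex.exp (2 * Real.pi * Complex.I *
            ((kd i : ℂ) * (lt : ℂ) + (kt : ℂ) * (ld i : ℂ) + (kt : ℂ) * (lt : ℂ)) /
            ((K : ℂ) * (L : ℂ)))) *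
          Complex.exp (-(2 * Real.pi * Complex.I * ((kd i : ℂ) + (kt : ℂ)) *
            ((ld i : ℂ) + (lt : ℂ)) / ((K : ℂ) * (L : ℂ)))) *
          X (k - ((kd i + kt : ℤ) : ZMod K)) (l - ((ld i + lt : ℤ) : ZMod L)) := by
  unfold otfsChannel ddShift
  apply Finset.sum_congr rfl
  intro i _
  have hK0 : (K : ℂ) ≠ 0 := Nat.cast_ne_zero.mpr hK.ne'
  have hL0 : (L : ℂ) ≠ 0 := Nat.cast_ne_zero.mpr hL.ne'
  have harg : X (k - (kd i : ZMod K) - (kt : ZMod K)) (l - (ld i : ZMod L) - (lt : ZMod L)) =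
      X (k - ((kd i + kt : ℤ) : ZMod K)) (l - ((ld i + lt : ℤ) : ZMod L)) := by
    push_cast
    ring_nf
  rw [harg]
  congr 1
  rw [mul_assoc (h i), ← Complex.exp_add]
  congr 1
  field_simp
  ring
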